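/- arXiv:0901.4951 — 4 statements merged into one kernel-verified Lean document; each statement's English description precedes it below -/
import Mathlib

section
/- Let R_k be defined by the recurrence R_0 = R_1 = 1 and R_k = \sum_{r=0}^{k-1} \sum_{l=0}^{k-1-r} R_r R_l R_{k-1-r-l} for k \ge 2. Then for all k \ge 1, R_k \le \binom{3(k-1)}{k-1}. -/
/-!
`R k` counts ternary trees with `k` internal nodes, since both satisfy the same recurrence.
In the preorder code of such a tree (`true` for an internal node, `false` for a leaf) a tree
with `j + 1` internal nodes has code `true :: Y ++ [false, false, false]`, where `Y` has
length `3 j` and exactly `j` entries `true`. Codes are prefix-free, so `Y` determines the tree,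
and there are at most `choose (3 j) j` such words.
-/

open Finset

theorem card_le_choose_of_length_count {n k : ℕ} (s : Finset (List Bool))
    (hlen : ∀ Y ∈ s, Y.length = n) (hcount : ∀ Y ∈ s, Y.count true = k) :
    #s ≤ n.choose k := by
  calc #s ≤ #(powersetCard k (range n)) := by
        refine card_le_card_of_injOn (fun Y => (Y.findIdxs (· == true)).toFinset)
          (fun Y hY => ?_) ?_
        · rw [mem_coe, mem_powersetCard]
          refine ⟨fun i hi => ?_, ?_⟩
          · simpa [hlen Y hY] using List.lt_add_of_mem_findIdxs i (List.mem_toFinset.mp hi)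
          · rw [List.toFinset_card_of_nodup List.nodup_findIdxs, List.length_findIdxs,
              ← hcount Y hY, List.count_eq_countP]
        · intro Y hY Y' hY' h
          refine List.ext_getElem (by rw [hlen Y hY, hlen Y' hY']) fun i hi hi' => ?_
          have := congrArg (i ∈ ·) h
          simp only [List.mem_toFinset, List.mem_findIdxs_iff_pos_getElem hi,
            List.mem_findIdxs_iff_pos_getElem hi', beq_iff_eq, eq_iff_iff] at this
          exact Bool.eq_iff_iff.mpr this
    _ = n.choose k := by simp

inductive TernaryTree : Type
  | leaf : TernaryTree
  | node : TernaryTree → TernaryTree → TernaryTree → TernaryTree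
  deriving DecidableEq

namespace TernaryTree

def numNodes : TernaryTree → ℕ
  | leaf => 0
  | node a b c => a.numNodes + b.numNodes + c.numNodes + 1

def ofHeightLE : ℕ → Finset TernaryTree
  | 0 => {leaf}
  | n + 1 => insert leaf
      ((ofHeightLE n ×ˢ ofHeightLE n ×ˢ ofHeightLE n).image fun p => node p.1 p.2.1 p.2.2)

theorem mem_ofHeightLE_of_numNodes_le : ∀ {n : ℕ} {t : TernaryTree}, t.numNodes ≤ n →
    t ∈ ofHeightLE n
  | 0, leaf, _ | _ + 1, leaf, _ => by simp [ofHeightLE]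
  | n + 1, node a b c, h => by
    simp only [numNodes] at h
    simp only [ofHeightLE, mem_insert, mem_image, mem_product]
    exact .inr ⟨(a, b, c), ⟨mem_ofHeightLE_of_numNodes_le (show a.numNodes ≤ n by omega),
      mem_ofHeightLE_of_numNodes_le (show b.numNodes ≤ n by omega),
      mem_ofHeightLE_of_numNodes_le (show c.numNodes ≤ n by omega)⟩, rfl⟩

def ofNumNodes (n : ℕ) : Finset TernaryTree :=
  (ofHeightLE n).filter (·.numNodes = n)

@[simp]
theorem mem_ofNumNodes {n : ℕ} {t : TernaryTree} : t ∈ ofNumNodes n ↔ t.numNodes = n :=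
  ⟨fun h => (mem_filter.mp h).2,
    fun h => mem_filter.mpr ⟨mem_ofHeightLE_of_numNodes_le h.le, h⟩⟩

theorem ofNumNodes_zero : ofNumNodes 0 = {leaf} := by
  ext (_ | _) <;> simp [numNodes]

theorem card_ofNumNodes_succ (n : ℕ) : #(ofNumNodes (n + 1)) =
    ∑ r ∈ range (n + 1), ∑ l ∈ range (n + 1 - r),
      #(ofNumNodes r) * #(ofNumNodes l) * #(ofNumNodes (n - r - l)) := by
  let triples := (range (n + 1)).sigma fun r => (range (n + 1 - r)).sigma fun l =>
    ofNumNodes r ×ˢ ofNumNodes l ×ˢ ofNumNodes (n - r - l)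
  let join (x : Σ _ : ℕ, Σ _ : ℕ, TernaryTree × TernaryTree × TernaryTree) : TernaryTree :=
    node x.2.2.1 x.2.2.2.1 x.2.2.2.2
  have himage : ofNumNodes (n + 1) = triples.image join := by
    ext (_ | ⟨a, b, c⟩)
    · simp [numNodes, join]
    · simp only [mem_ofNumNodes, numNodes, triples, join, mem_image, mem_sigma, mem_range,
        mem_product, Sigma.exists, Prod.exists, node.injEq]
      constructor
      · intro h
        exact ⟨a.numNodes, b.numNodes, a, b, c, ⟨by omega, by omega, rfl, rfl, by omega⟩,
          rfl, rfl, rfl⟩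
      · rintro ⟨r, l, a, b, c, ⟨hr, hl, rfl, rfl, hc⟩, rfl, rfl, rfl⟩
        omega
  have hinj : Set.InjOn join triples := by
    rintro ⟨r, l, a, b, c⟩ h ⟨r', l', a', b', c'⟩ h' heq
    simp only [triples, coe_sigma, Set.mem_sigma_iff, coe_product, Set.mem_prod, mem_coe,
      mem_ofNumNodes] at h h'
    simp only [join, node.injEq] at heq
    obtain ⟨rfl, rfl, rfl⟩ := heq
    obtain ⟨-, -, rfl, rfl, -⟩ := h
    obtain ⟨-, -, ha, hb, -⟩ := h'
    subst ha hb
    rfl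
  rw [himage, card_image_of_injOn hinj]
  simp only [triples, card_sigma, card_product, mul_assoc]

def encode : TernaryTree → List Bool
  | leaf => [false]
  | node a b c => true :: (a.encode ++ b.encode ++ c.encode)

theorem length_encode : ∀ t : TernaryTree, t.encode.length = 3 * t.numNodes + 1
  | leaf => rfl
  | node a b c => by
    simp only [encode, numNodes, List.length_cons, List.length_append, length_encode]
    omega

theorem count_true_encode : ∀ t : TernaryTree, t.encode.count true = t.numNodes
  | leaf => rfl
  | node a b c => by
    simp only [encode, numNodes, List.count_cons_self, List.count_append, count_true_encode]

theorem encode_append_inj {s t : TernaryTree} {l l' : List Bool}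
    (h : s.encode ++ l = t.encode ++ l') : s = t ∧ l = l' := by
  induction s generalizing t l l' with
  | leaf => cases t <;> simp_all [encode]
  | node a b c iha ihb ihc =>
    cases t with
    | leaf => simp [encode] at h
    | node a' b' c' =>
      simp only [encode, List.cons_append, List.cons.injEq, List.append_assoc, true_and] at h
      obtain ⟨rfl, hbc⟩ := iha h
      obtain ⟨rfl, hc⟩ := ihb hbc
      obtain ⟨rfl, rfl⟩ := ihc hc
      exact ⟨rfl, rfl⟩

theorem encode_injective : Function.Injective encode := fun _ _ h =>
  (encode_append_inj (l := []) (l' := []) (by simpa using h)).1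

theorem false_suffix_encode : ∀ t : TernaryTree, [false] <:+ t.encode
  | leaf => List.suffix_refl _
  | node a b c =>
    (false_suffix_encode c).trans ⟨true :: (a.encode ++ b.encode), by simp [encode]⟩

theorem two_false_suffix_encode_append (a : TernaryTree) :
    ∀ b : TernaryTree, [false, false] <:+ a.encode ++ b.encode
  | leaf => List.suffix_append_self_iff.mpr (false_suffix_encode a)
  | node a' b' c' => (two_false_suffix_encode_append b' c').trans
      ⟨a.encode ++ true :: a'.encode, by simp [encode]⟩

-- The last internal node in preorder has three leaf children, and they end the code.
theorem three_false_suffix_encode_append (a b : TernaryTree) :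
    ∀ c : TernaryTree, [false, false, false] <:+ a.encode ++ b.encode ++ c.encode
  | leaf => List.suffix_append_self_iff.mpr (two_false_suffix_encode_append a b)
  | node a' b' c' => (three_false_suffix_encode_append a' b' c').trans
      ⟨a.encode ++ b.encode ++ [true], by simp [encode]⟩

theorem exists_encode_eq_of_numNodes_eq_succ {t : TernaryTree} {j : ℕ} (h : t.numNodes = j + 1) :
    ∃ Y : List Bool, t.encode = true :: (Y ++ [false, false, false]) ∧
      Y.length = 3 * j ∧ Y.count true = j := by
  cases t with
  | leaf => simp [numNodes] at h
  | node a b c =>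
    obtain ⟨Y, hY⟩ := three_false_suffix_encode_append a b c
    have hcode : (node a b c).encode = true :: (Y ++ [false, false, false]) := by rw [encode, hY]
    have hlen := length_encode (node a b c)
    have hcount := count_true_encode (node a b c)
    rw [hcode, h] at hlen hcount
    simp only [List.length_cons, List.length_append, List.length_nil, List.count_cons_self,
      List.count_append] at hlen hcount
    exact ⟨Y, hcode, by omega, by simpa using hcount⟩

theorem card_ofNumNodes_succ_le (j : ℕ) : #(ofNumNodes (j + 1)) ≤ (3 * j).choose j := by
  let interior (t : TernaryTree) : List Bool := t.encode.tail.take (3 * j)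
  have hinterior : ∀ t ∈ ofNumNodes (j + 1),
      t.encode = true :: (interior t ++ [false, false, false]) ∧
      (interior t).length = 3 * j ∧ (interior t).count true = j := by
    intro t ht
    obtain ⟨Y, hcode, hlen, hcount⟩ :=
      exists_encode_eq_of_numNodes_eq_succ (mem_ofNumNodes.mp ht)
    have : interior t = Y := by simp [interior, hcode, List.take_left' hlen]
    exact ⟨this ▸ hcode, this ▸ hlen, this ▸ hcount⟩
  have hinj : Set.InjOn interior (ofNumNodes (j + 1)) := fun s hs t ht h =>
    encode_injective <| by rw [(hinterior s hs).1, (hinterior t ht).1, h]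
  rw [← card_image_of_injOn hinj]
  exact card_le_choose_of_length_count _ (forall_mem_image.mpr fun t ht => (hinterior t ht).2.1)
    (forall_mem_image.mpr fun t ht => (hinterior t ht).2.2)

end TernaryTree

theorem stmt_0 (R : ℕ → ℕ) (h0 : R 0 = 1) (h1 : R 1 = 1)
    (hrec : ∀ k, 2 ≤ k →
      R k = ∑ r ∈ Finset.range k, ∑ l ∈ Finset.range (k - r),
        R r * R l * R (k - 1 - r - l)) :
    ∀ k, 1 ≤ k → R k ≤ Nat.choose (3 * (k - 1)) (k - 1) := by
  have hR : ∀ k, R k = #(TernaryTree.ofNumNodes k) := by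
    intro k
    induction k using Nat.strong_induction_on with
    | _ k ih =>
      match k with
      | 0 => rw [h0, TernaryTree.ofNumNodes_zero, card_singleton]
      | 1 => rw [h1, TernaryTree.card_ofNumNodes_succ 0]; simp [TernaryTree.ofNumNodes_zero]
      | n + 2 =>
        rw [hrec (n + 2) (by omega), TernaryTree.card_ofNumNodes_succ (n + 1)]
        refine sum_congr rfl fun r hr => sum_congr rfl fun l hl => ?_
        rw [mem_range] at hr hl
        rw [ih r (by omega), ih l (by omega), ih (n + 2 - 1 - r - l) (by omega)]
        rfl
  rintro (_ | j) hk
  · omega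
  · simpa [hR] using TernaryTree.card_ofNumNodes_succ_le j
end

section
/- The limit as k tends to infinity of (1/k) * ln( \binom{3k-3}{k-1} - \binom{3k-6}{k-1} ) equals ln(27/4). -/
/-!
Stirling's formula gives `log n! = n log n - n + o(n)`, so for fixed `a b` the `n log n - n`
terms cancel in `log ((a + b) m)! - log (a m)! - log (b m)!` up to `m ((a + b) log (a + b) - a log a -
b log b)`; for `(a, b) = (1, 2)` this gives `log C(3m, m) = m log (27/4) + o(m)`.
Pascal's rule `C(3k-6, k-2) + C(3k-6, k-1) = C(3k-5, k-1) ≤ C(3k-3, k-1)` squeezes the difference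
between `C(3(k-2), k-2)` and `C(3(k-1), k-1)`, and a bounded shift of the index does not change
the growth rate.
-/

open Real Filter Topology
open scoped Nat

noncomputable def logFactorialError (n : ℕ) : ℝ := log n ! - (n * log n - n)

lemma tendsto_logFactorialError_div :
    Tendsto (fun n : ℕ => logFactorialError n / n) atTop (𝓝 0) := by
  have hlog : Tendsto (fun n : ℕ => log (2 * n) / n) atTop (𝓝 0) := by
    refine ((tendsto_pow_log_div_mul_add_atTop (1 / 2) 0 1 (by norm_num)).comp
      (tendsto_natCast_atTop_atTop.const_mul_atTop (two_pos (α := ℝ)))).congr fun n => ?_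
    simp only [Function.comp_apply, pow_one, add_zero]
    ring_nf
  have hS : Tendsto (fun n : ℕ => log (Stirling.stirlingSeq n) / n) atTop (𝓝 0) :=
    (Stirling.tendsto_stirlingSeq_sqrt_pi.log (by positivity)).div_atTop
      tendsto_natCast_atTop_atTop
  have h := (hlog.const_mul (1 / 2)).add hS
  rw [mul_zero, add_zero] at h
  refine h.congr' ?_
  filter_upwards [eventually_ne_atTop 0] with n hn
  rw [logFactorialError, Stirling.log_stirlingSeq_formula,
    log_div (by positivity) (exp_ne_zero 1), log_exp]
  ring

lemma tendsto_logFactorialError_mul_div (c : ℕ) :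
    Tendsto (fun m : ℕ => logFactorialError (c * m) / m) atTop (𝓝 0) := by
  rcases eq_or_ne c 0 with rfl | hc
  · simp [logFactorialError]
  have h := (tendsto_logFactorialError_div.comp
    (tendsto_id.const_mul_atTop' (Nat.pos_of_ne_zero hc))).const_mul (c : ℝ)
  rw [mul_zero] at h
  refine h.congr fun m => ?_
  simp only [Function.comp_apply, id, Nat.cast_mul]
  field_simp

lemma log_choose_mul_eq (a b : ℕ) {m : ℕ} (hm : m ≠ 0) :
    log (((a + b) * m).choose (a * m)) =
      m * ((a + b) * log (a + b) - a * log a - b * log b) +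
        (logFactorialError ((a + b) * m) - logFactorialError (a * m) -
          logFactorialError (b * m)) := by
  have hmul : ∀ c : ℕ, (c * m : ℝ) * log (c * m) = m * (c * log c) + c * m * log m := by
    intro c
    rcases eq_or_ne c 0 with rfl | hc
    · simp
    rw [log_mul (by exact_mod_cast hc) (by exact_mod_cast hm)]
    ring
  have hsub : (a + b) * m - a * m = b * m := by rw [add_mul, Nat.add_sub_cancel_left]
  rw [Nat.cast_choose ℝ (Nat.mul_le_mul_right m (Nat.le_add_right a b)), hsub,
    log_div (by positivity) (by positivity), log_mul (by positivity) (by positivity)]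
  simp only [logFactorialError, Nat.cast_mul, Nat.cast_add]
  have := hmul (a + b)
  push_cast at this
  rw [this, hmul a, hmul b]
  ring

lemma tendsto_log_choose_mul_div (a b : ℕ) :
    Tendsto (fun m : ℕ => log (((a + b) * m).choose (a * m)) / m) atTop
      (𝓝 ((a + b) * log (a + b) - a * log a - b * log b)) := by
  have h := (((tendsto_logFactorialError_mul_div (a + b)).sub
    (tendsto_logFactorialError_mul_div a)).sub (tendsto_logFactorialError_mul_div b)).const_add
    ((a + b) * log (a + b) - a * log a - b * log b : ℝ)
  rw [sub_zero, sub_zero, add_zero] at h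
  refine h.congr' ?_
  filter_upwards [eventually_ne_atTop 0] with m hm
  rw [log_choose_mul_eq a b hm]
  field_simp

lemma tendsto_log_choose_three_mul_div :
    Tendsto (fun m : ℕ => log ((3 * m).choose m) / m) atTop (𝓝 (log (27 / 4))) := by
  have h := tendsto_log_choose_mul_div 1 2
  norm_num at h
  convert h using 2
  rw [log_div (by norm_num) (by norm_num), show (27 : ℝ) = 3 ^ 3 by norm_num,
    show (4 : ℝ) = 2 ^ 2 by norm_num, log_pow, log_pow]
  norm_num

lemma Filter.Tendsto.comp_sub_div {u : ℕ → ℝ} {L : ℝ}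
    (h : Tendsto (fun m : ℕ => u m / m) atTop (𝓝 L)) (c : ℕ) :
    Tendsto (fun k : ℕ => u (k - c) / k) atTop (𝓝 L) := by
  rw [← tendsto_add_atTop_iff_nat c]
  have h' := h.mul (tendsto_natCast_div_add_atTop (c : ℝ))
  rw [mul_one] at h'
  refine h'.congr' ?_
  filter_upwards [eventually_ne_atTop 0] with m hm
  simp only [Nat.add_sub_cancel, Nat.cast_add]
  field_simp

lemma Nat.choose_add_choose_succ_le {n m : ℕ} (h : n < m) (k : ℕ) :
    n.choose k + n.choose (k + 1) ≤ m.choose (k + 1) :=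
  Nat.choose_succ_succ n k ▸ Nat.choose_le_choose (k + 1) h

theorem stmt_1 :
    Filter.Tendsto
      (fun k : ℕ => (1 / (k : ℝ)) *
        Real.log ((Nat.choose (3 * k - 3) (k - 1) : ℝ) -
          (Nat.choose (3 * k - 6) (k - 1) : ℝ)))
      Filter.atTop (nhds (Real.log (27 / 4))) := by
  have h := tendsto_log_choose_three_mul_div
  have hlower : ∀ j : ℕ, ((3 * j).choose j : ℝ) ≤
      (3 * (j + 1)).choose (j + 1) - (3 * j).choose (j + 1) := by
    intro j
    rw [le_sub_iff_add_le]
    exact_mod_cast Nat.choose_add_choose_succ_le (by omega) j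
  simp only [one_div_mul_eq_div]
  refine tendsto_of_tendsto_of_tendsto_of_le_of_le' (h.comp_sub_div 2) (h.comp_sub_div 1) ?_ ?_ <;>
    filter_upwards [eventually_ge_atTop 2] with k hk <;>
    obtain ⟨j, rfl⟩ := Nat.exists_eq_add_of_le' hk <;>
    rw [show 3 * (j + 2) - 3 = 3 * (j + 1) by omega, show 3 * (j + 2) - 6 = 3 * j by omega,
      show j + 2 - 1 = j + 1 by omega] <;>
    refine div_le_div_of_nonneg_right (log_le_log ?_ ?_) (Nat.cast_nonneg _)
  · exact Nat.cast_pos.2 (Nat.choose_pos (by omega))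
  · exact hlower j
  · exact (Nat.cast_pos.2 (Nat.choose_pos (by omega))).trans_le (hlower j)
  · exact sub_le_self _ (Nat.cast_nonneg _)
end

section
/- Let R_k satisfy R_0 = R_1 = 1 and R_k = \sum_{r+l+q=k-1, r,l,q \ge 0} R_r R_l R_q. Then R_k \le e^{2k} for all k \ge 1. -/
open Finset

/-- `Fc j n = [x^n] y(x)^j` where `y = 1 + x y^3` (generalized ballot numbers). -/
noncomputable def Fc (j n : ℕ) : ℝ :=
  match n with
  | 0 => 1
  | m + 1 => ((3*m+2+j).choose (m+1) : ℝ) - 2 * ((3*m+2+j).choose m : ℝ)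

lemma Fc_zero (j : ℕ) : Fc j 0 = 1 := rfl

lemma Fc_succ (j m : ℕ) :
    Fc j (m+1) = ((3*m+2+j).choose (m+1) : ℝ) - 2 * ((3*m+2+j).choose m : ℝ) := rfl

lemma Fc0 (m : ℕ) : Fc 0 (m+1) = 0 := by
  rw [Fc_succ]
  have h := Nat.choose_succ_right_eq (3*m+2) m
  have h2 : 3*m+2-m = 2*(m+1) := by omega
  rw [h2] at h
  have h3 : ((3*m+2+0).choose (m+1) : ℝ) * (m+1) = ((3*m+2+0).choose m : ℝ) * (2*(m+1)) := by
    exact_mod_cast congrArg (Nat.cast (R := ℝ)) h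
  have hm : ((m:ℝ)+1) ≠ 0 := by positivity
  have := mul_right_cancel₀ hm (by linarith : ((3*m+2+0).choose (m+1) : ℝ) * ((m:ℝ)+1) = (2 * ((3*m+2+0).choose m : ℝ)) * ((m:ℝ)+1))
  linarith

lemma Fc_rec (j n : ℕ) : Fc (j+1) (n+1) = Fc j (n+1) + Fc (j+3) n := by
  cases n with
  | zero =>
    rw [Fc_succ, Fc_succ, Fc_zero]
    simp [Nat.choose_one_right]
  | succ m =>
    rw [Fc_succ, Fc_succ, Fc_succ]
    have e1 : 3*(m+1)+2+(j+1) = (3*m+5+j)+1 := by ring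
    have e2 : 3*(m+1)+2+j = 3*m+5+j := by ring
    have e3 : 3*m+2+(j+3) = 3*m+5+j := by ring
    rw [e1, e2, e3]
    have p1 : ((3*m+5+j)+1).choose ((m+1)+1) = (3*m+5+j).choose (m+1) + (3*m+5+j).choose (m+2) := by
      exact Nat.choose_succ_succ _ _
    have p2 : ((3*m+5+j)+1).choose (m+1) = (3*m+5+j).choose m + (3*m+5+j).choose (m+1) := by
      exact Nat.choose_succ_succ _ _
    rw [p1, p2]
    push_cast
    ring

lemma Fc_conv (n : ℕ) : ∀ i j : ℕ,
    ∑ m ∈ range (n+1), Fc i m * Fc j (n - m) = Fc (i+j) n := by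
  induction n using Nat.strong_induction_on with
  | _ n ihn =>
    intro i
    induction i with
    | zero =>
      intro j
      rw [Finset.sum_eq_single_of_mem 0 (by simp)]
      · simp [Fc_zero]
      · intro b _ hb
        obtain ⟨b', rfl⟩ := Nat.exists_eq_succ_of_ne_zero hb
        rw [Fc0, zero_mul]
    | succ i ihi =>
      intro j
      cases n with
      | zero => simp [Fc_zero]
      | succ n' =>
        rw [Finset.sum_range_succ']
        have step1 : ∀ m ∈ range (n'+1),
            Fc (i+1) (m+1) * Fc j (n'+1-(m+1))
              = Fc i (m+1) * Fc j (n'-m) + Fc (i+3) m * Fc j (n'-m) := by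
          intro m _
          have e : n'+1-(m+1) = n'-m := by omega
          rw [e, Fc_rec, add_mul]
        rw [Finset.sum_congr rfl step1, Finset.sum_add_distrib]
        have hB : ∑ m ∈ range (n'+1), Fc (i+3) m * Fc j (n'-m) = Fc (i+3+j) n' :=
          ihn n' (by omega) (i+3) j
        have hA : (∑ m ∈ range (n'+1), Fc i (m+1) * Fc j (n'-m))
            + Fc (i+1) 0 * Fc j (n'+1-0) = Fc (i+j) (n'+1) := by
          have h0' := Finset.sum_range_succ' (fun m => Fc i m * Fc j (n'+1-m)) (n'+1)
          rw [ihi j] at h0'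
          have e2 : (∑ m ∈ range (n'+1), Fc i (m+1) * Fc j (n'+1-(m+1)))
              = ∑ m ∈ range (n'+1), Fc i (m+1) * Fc j (n'-m) := by
            apply Finset.sum_congr rfl
            intro m _
            have e : n'+1-(m+1) = n'-m := by omega
            rw [e]
          rw [e2] at h0'
          simp only [Fc_zero, one_mul] at h0' ⊢
          linarith [h0']
        calc (∑ m ∈ range (n'+1), Fc i (m+1) * Fc j (n'-m))
              + (∑ m ∈ range (n'+1), Fc (i+3) m * Fc j (n'-m))
              + Fc (i+1) 0 * Fc j (n'+1-0)
            = ((∑ m ∈ range (n'+1), Fc i (m+1) * Fc j (n'-m))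
              + Fc (i+1) 0 * Fc j (n'+1-0)) + Fc (i+3+j) n' := by rw [hB]; ring
          _ = Fc (i+j) (n'+1) + Fc (i+3+j) n' := by rw [hA]
          _ = Fc (i+1+j) (n'+1) := by
              have e : i+3+j = (i+j)+3 := by ring
              have e2 : i+1+j = (i+j)+1 := by ring
              rw [e, e2, Fc_rec]

lemma choose_le (k : ℕ) : (((3*k).choose k : ℕ) : ℝ) ≤ (27/4)^k := by
  induction k with
  | zero => norm_num
  | succ k ih =>
    have hk : k ≤ 3*k := by omega
    have hk1 : k+1 ≤ 3*k+3 := by omega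
    have e0 : 3*(k+1) = 3*k+3 := by ring
    rw [e0, Nat.cast_choose ℝ hk1]
    rw [Nat.cast_choose ℝ hk] at ih
    have es : 3*k - k = 2*k := by omega
    rw [es] at ih
    have ed : 3*k+3-(k+1) = 2*k+2 := by omega
    rw [ed]
    have hf3 : ((3*k+3).factorial : ℝ)
        = (3*(k:ℝ)+3)*(3*(k:ℝ)+2)*(3*(k:ℝ)+1)*(3*k).factorial := by
      rw [show 3*k+3 = (3*k+2)+1 by ring, Nat.factorial_succ,
          show 3*k+2 = (3*k+1)+1 by ring, Nat.factorial_succ,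
          show 3*k+1 = (3*k)+1 by ring, Nat.factorial_succ]
      push_cast; ring
    have hfk : (((k+1)).factorial : ℝ) = ((k:ℝ)+1)*(k.factorial) := by
      rw [Nat.factorial_succ]; push_cast; ring
    have hf2 : ((2*k+2).factorial : ℝ)
        = (2*(k:ℝ)+2)*(2*(k:ℝ)+1)*(2*k).factorial := by
      rw [show 2*k+2 = (2*k+1)+1 by ring, Nat.factorial_succ,
          show 2*k+1 = (2*k)+1 by ring, Nat.factorial_succ]
      push_cast; ring
    rw [hf3, hfk, hf2]
    have pos3 : (0:ℝ) < (3*k).factorial := by positivity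
    have posk : (0:ℝ) < (k).factorial := by positivity
    have pos2 : (0:ℝ) < (2*k).factorial := by positivity
    have key : ((3*(k:ℝ)+3)*(3*(k:ℝ)+2)*(3*(k:ℝ)+1)*((3*k).factorial : ℝ))
        / (((k:ℝ)+1)*(k.factorial) * ((2*(k:ℝ)+2)*(2*(k:ℝ)+1)*((2*k).factorial:ℝ)))
        = (((3*(k:ℝ)+1)*(3*(k:ℝ)+2)*(3*(k:ℝ)+3)) / (((k:ℝ)+1)*(2*(k:ℝ)+1)*(2*(k:ℝ)+2)))
          * (((3*k).factorial:ℝ) / ((k.factorial:ℝ) * ((2*k).factorial:ℝ))) := by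
      field_simp
    rw [key, pow_succ, mul_comm ((27/4:ℝ)^k) (27/4)]
    apply mul_le_mul
    · rw [div_le_iff₀ (by positivity)]
      nlinarith [sq_nonneg ((k:ℝ)), Nat.cast_nonneg (α := ℝ) k]
    · exact ih
    · positivity
    · norm_num

lemma pow_le_exp (k : ℕ) : ((27:ℝ)/4)^k ≤ Real.exp (2*k) := by
  have h2 : ((27:ℝ)/4) ≤ Real.exp 2 := by
    have h := Real.exp_one_gt_d9
    have : Real.exp 2 = Real.exp 1 * Real.exp 1 := by
      rw [← Real.exp_add]; norm_num
    nlinarith [Real.exp_pos 1]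
  calc ((27:ℝ)/4)^k ≤ (Real.exp 2)^k := by
        apply pow_le_pow_left₀ (by norm_num) h2
    _ = Real.exp (2*k) := by
        rw [← Real.exp_nat_mul]; ring_nf

theorem stmt_2 (R : ℕ → ℕ) (h0 : R 0 = 1) (h1 : R 1 = 1)
    (hrec : ∀ k, 2 ≤ k →
      R k = ∑ r ∈ Finset.range k, ∑ l ∈ Finset.range (k - r),
        R r * R l * R (k - 1 - r - l)) :
    ∀ k, 1 ≤ k → (R k : ℝ) ≤ Real.exp (2 * k) := by
  have hF : ∀ k, (R k : ℝ) = Fc 1 k := by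
    intro k
    induction k using Nat.strong_induction_on with
    | _ k ih =>
      match k with
      | 0 => rw [h0, Fc_zero]; norm_num
      | 1 => rw [h1, Fc_succ]; norm_num
      | (n+2) =>
        rw [hrec (n+2) (by omega)]
        push_cast
        have inner : ∀ r ∈ range (n+2),
            (∑ l ∈ range (n+2-r), (R r : ℝ) * (R l : ℝ) * (R (n+1-r-l) : ℝ))
              = Fc 1 r * Fc 2 (n+1-r) := by
          intro r hr
          rw [mem_range] at hr
          have er : n+2-r = (n+1-r)+1 := by omega
          rw [er]
          have : ∀ l ∈ range ((n+1-r)+1),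
              (R r : ℝ) * (R l : ℝ) * (R (n+1-r-l) : ℝ)
                = Fc 1 r * (Fc 1 l * Fc 1 ((n+1-r) - l)) := by
            intro l hl
            rw [mem_range] at hl
            have eq : n+1-r-l = (n+1-r)-l := by omega
            rw [eq, ih r (by omega), ih l (by omega), ih ((n+1-r)-l) (by omega)]
            ring
          rw [Finset.sum_congr rfl this, ← Finset.mul_sum, Fc_conv (n+1-r) 1 1]
        rw [Finset.sum_congr rfl inner]
        have eo : n+2 = (n+1)+1 := by ring
        rw [eo]
        have : ∀ r ∈ range ((n+1)+1),
            Fc 1 r * Fc 2 (n+1-r) = Fc 1 r * Fc 2 ((n+1)-r) := by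
          intro r _; rfl
        rw [Finset.sum_congr rfl this, Fc_conv (n+1) 1 2]
        have h13 : Fc 1 ((n+1)+1) = Fc 0 ((n+1)+1) + Fc 3 (n+1) := Fc_rec 0 (n+1)
        rw [h13, Fc0]
        ring
  intro k hk
  obtain ⟨m, rfl⟩ := Nat.exists_eq_succ_of_ne_zero (by omega : k ≠ 0)
  rw [hF]
  have hle : Fc 1 (m+1) ≤ ((3*(m+1)).choose (m+1) : ℝ) := by
    rw [Fc_succ]
    have e : 3*m+2+1 = 3*(m+1) := by ring
    rw [e]
    have : (0:ℝ) ≤ 2 * ((3*(m+1)).choose m : ℝ) := by positivity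
    linarith
  calc Fc 1 (m+1) ≤ ((3*(m+1)).choose (m+1) : ℝ) := hle
    _ ≤ (27/4)^(m+1) := choose_le (m+1)
    _ ≤ Real.exp (2*((m:ℕ)+1:ℕ)) := pow_le_exp (m+1)
    _ = Real.exp (2 * (m.succ : ℕ)) := by norm_num
end

section
/- Let u : \mathbb{Z} \to \mathbb{R} satisfy |u_m(x)| \le D e^{\varepsilon |x_m|} e^{-\gamma |x - x_m|} for m \in \{n, m_1, m_2, m_3\} with centers x_n, x_{m_1}, x_{m_2}, x_{m_3} \in \mathbb{Z}, constants D \ge 0, \gamma > 0, \varepsilon \ge 0. Then for any 0 < \varepsilon' < \gamma, |\sum_{x \in \mathbb{Z}} u_n(x) u_{m_1}(x) u_{m_2}(x) u_{m_3}(x)| \le V e^{\varepsilon(|x_n| + |x_{m_1}| + |x_{m_2}| + |x_{m_3}|)} e^{-\frac{\gamma - \varepsilon'}{3}(|x_n - x_{m_1}| + |x_n - x_{m_2}| + |x_n - x_{m_3}|)}, where V = D^4 \sum_{x \in \mathbb{Z}} e^{-\varepsilon'(|x - x_n| + |x - x_{m_1}| + |x - x_{m_2}| + |x - x_{m_3}|)}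 is finite. -/
set_option maxHeartbeats 1000000 in
private lemma summable_exp_int (b : ℝ) (hb : 0 < b) :
    Summable fun n : ℤ => Real.exp (-b * |(n : ℝ)|) := by
  have hbase : Summable fun n : ℕ => Real.exp (-b) ^ n :=
    summable_geometric_of_lt_one (Real.exp_pos _).le
      (Real.exp_lt_one_iff.mpr (by linarith))
  refine Summable.of_nat_of_neg (hbase.congr fun n => ?_) (hbase.congr fun n => ?_) <;>
  · rw [← Real.exp_nat_mul]
    congr 1
    push_cast
    simp [abs_of_nonneg, Nat.cast_nonneg]
    try ring

set_option maxHeartbeats 1000000 in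
private lemma summable_exp_int_shift (b : ℝ) (hb : 0 < b) (c : ℤ) :
    Summable fun n : ℤ => Real.exp (-b * |(n : ℝ) - (c : ℝ)|) := by
  have h := ((Equiv.subRight c).summable_iff
    (f := fun n : ℤ => Real.exp (-b * |(n : ℝ)|))).mpr (summable_exp_int b hb)
  refine h.congr fun n => ?_
  simp only [Function.comp, Equiv.subRight_apply]
  push_cast
  ring_nf

private lemma exp_prod4 (D a0 a1 a2 a3 b0 b1 b2 b3 : ℝ) :
    (D * Real.exp a0 * Real.exp b0) * (D * Real.exp a1 * Real.exp b1) *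
      (D * Real.exp a2 * Real.exp b2) * (D * Real.exp a3 * Real.exp b3) =
    D ^ 4 * Real.exp (a0 + a1 + a2 + a3) * Real.exp (b0 + b1 + b2 + b3) := by
  rw [Real.exp_add, Real.exp_add, Real.exp_add, Real.exp_add, Real.exp_add, Real.exp_add]
  ring

theorem stmt_16 (u : Fin 4 → ℤ → ℝ) (y : Fin 4 → ℤ)
    (D γ ε : ℝ) (hD : 0 ≤ D) (hγ : 0 < γ) (hε : 0 ≤ ε)
    (hu : ∀ i, ∀ x : ℤ, |u i x| ≤
      D * Real.exp (ε * |(y i : ℝ)|) * Real.exp (-γ * |(x : ℝ) - (y i : ℝ)|))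
    (ε' : ℝ) (hε'0 : 0 < ε') (hε'γ : ε' < γ) :
    |∑' x : ℤ, u 0 x * u 1 x * u 2 x * u 3 x| ≤
      (D ^ 4 * ∑' x : ℤ,
        Real.exp (-ε' * (|(x : ℝ) - (y 0 : ℝ)| + |(x : ℝ) - (y 1 : ℝ)| +
          |(x : ℝ) - (y 2 : ℝ)| + |(x : ℝ) - (y 3 : ℝ)|))) *
      Real.exp (ε * (|(y 0 : ℝ)| + |(y 1 : ℝ)| + |(y 2 : ℝ)| + |(y 3 : ℝ)|)) *
      Real.exp (-(γ - ε') / 3 *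
        (|(y 0 : ℝ) - (y 1 : ℝ)| + |(y 0 : ℝ) - (y 2 : ℝ)| + |(y 0 : ℝ) - (y 3 : ℝ)|)) := by
  set T : ℤ → ℝ := fun x => |(x : ℝ) - (y 0 : ℝ)| + |(x : ℝ) - (y 1 : ℝ)| +
      |(x : ℝ) - (y 2 : ℝ)| + |(x : ℝ) - (y 3 : ℝ)| with hT
  set Y : ℝ := |(y 0 : ℝ) - (y 1 : ℝ)| + |(y 0 : ℝ) - (y 2 : ℝ)| + |(y 0 : ℝ) - (y 3 : ℝ)|
    with hY
  set E : ℝ := Real.exp (ε * (|(y 0 : ℝ)| + |(y 1 : ℝ)| + |(y 2 : ℝ)| + |(y 3 : ℝ)|)) with hE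
  set F : ℝ := Real.exp (-(γ - ε') / 3 * Y) with hF
  have hE0 : 0 < E := Real.exp_pos _
  have hF0 : 0 < F := Real.exp_pos _
  set g : ℤ → ℝ := fun x => Real.exp (-ε' * T x) with hg
  clear_value T Y E F g
  -- summability of g
  have hgsum : Summable g := by
    rw [hg]
    refine Summable.of_nonneg_of_le (fun x => (Real.exp_pos _).le) (fun x => ?_)
      (summable_exp_int_shift ε' hε'0 (y 0))
    apply Real.exp_le_exp.mpr
    have h1 : 0 ≤ |(x : ℝ) - (y 1 : ℝ)| := abs_nonneg _
    have h2 : 0 ≤ |(x : ℝ) - (y 2 : ℝ)| := abs_nonneg _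
    have h3 : 0 ≤ |(x : ℝ) - (y 3 : ℝ)| := abs_nonneg _
    simp only [hT]
    nlinarith [hε'0.le]
  -- pointwise bound
  have key : ∀ x : ℤ, |u 0 x * u 1 x * u 2 x * u 3 x| ≤ D ^ 4 * E * F * g x := by
    intro x
    have hYT : Y ≤ 3 * T x := by
      have d1 : |(y 0 : ℝ) - (y 1 : ℝ)| ≤ |(x : ℝ) - (y 0 : ℝ)| + |(x : ℝ) - (y 1 : ℝ)| := by
        calc |(y 0 : ℝ) - (y 1 : ℝ)| ≤ |(y 0 : ℝ) - (x : ℝ)| + |(x : ℝ) - (y 1 : ℝ)| :=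
              abs_sub_le _ _ _
          _ = |(x : ℝ) - (y 0 : ℝ)| + |(x : ℝ) - (y 1 : ℝ)| := by rw [abs_sub_comm]
      have d2 : |(y 0 : ℝ) - (y 2 : ℝ)| ≤ |(x : ℝ) - (y 0 : ℝ)| + |(x : ℝ) - (y 2 : ℝ)| := by
        calc |(y 0 : ℝ) - (y 2 : ℝ)| ≤ |(y 0 : ℝ) - (x : ℝ)| + |(x : ℝ) - (y 2 : ℝ)| :=
              abs_sub_le _ _ _
          _ = |(x : ℝ) - (y 0 : ℝ)| + |(x : ℝ) - (y 2 : ℝ)| := by rw [abs_sub_comm]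
      have d3 : |(y 0 : ℝ) - (y 3 : ℝ)| ≤ |(x : ℝ) - (y 0 : ℝ)| + |(x : ℝ) - (y 3 : ℝ)| := by
        calc |(y 0 : ℝ) - (y 3 : ℝ)| ≤ |(y 0 : ℝ) - (x : ℝ)| + |(x : ℝ) - (y 3 : ℝ)| :=
              abs_sub_le _ _ _
          _ = |(x : ℝ) - (y 0 : ℝ)| + |(x : ℝ) - (y 3 : ℝ)| := by rw [abs_sub_comm]
      simp only [hY, hT]
      linarith [abs_nonneg ((x:ℝ) - (y 1 : ℝ)), abs_nonneg ((x:ℝ) - (y 2 : ℝ)),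
        abs_nonneg ((x:ℝ) - (y 3 : ℝ))]
    calc |u 0 x * u 1 x * u 2 x * u 3 x|
        = |u 0 x| * |u 1 x| * |u 2 x| * |u 3 x| := by
          rw [abs_mul, abs_mul, abs_mul]
      _ ≤ (D * Real.exp (ε * |(y 0 : ℝ)|) * Real.exp (-γ * |(x : ℝ) - (y 0 : ℝ)|)) *
          (D * Real.exp (ε * |(y 1 : ℝ)|) * Real.exp (-γ * |(x : ℝ) - (y 1 : ℝ)|)) *
          (D * Real.exp (ε * |(y 2 : ℝ)|) * Real.exp (-γ * |(x : ℝ) - (y 2 : ℝ)|)) *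
          (D * Real.exp (ε * |(y 3 : ℝ)|) * Real.exp (-γ * |(x : ℝ) - (y 3 : ℝ)|)) := by
            gcongr <;> first | exact abs_nonneg _ | exact hu _ _
      _ = D ^ 4 * Real.exp (ε * |(y 0 : ℝ)| + ε * |(y 1 : ℝ)| + ε * |(y 2 : ℝ)| + ε * |(y 3 : ℝ)|)
            * Real.exp (-γ * |(x : ℝ) - (y 0 : ℝ)| + -γ * |(x : ℝ) - (y 1 : ℝ)| +
              -γ * |(x : ℝ) - (y 2 : ℝ)| + -γ * |(x : ℝ) - (y 3 : ℝ)|) := exp_prod4 ..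
      _ = D ^ 4 * E * Real.exp (-γ * T x) := by
            rw [hE, hT]; congr 2 <;> ring
      _ ≤ D ^ 4 * E * F * g x := by
            have : Real.exp (-γ * T x) ≤ F * g x := by
              rw [hF, hg, ← Real.exp_add]
              apply Real.exp_le_exp.mpr
              have hm : (γ - ε') * Y ≤ (γ - ε') * (3 * T x) :=
                mul_le_mul_of_nonneg_left hYT (sub_nonneg.mpr hε'γ.le)
              linarith
            calc D ^ 4 * E * Real.exp (-γ * T x) ≤ D ^ 4 * E * (F * g x) := by
                  apply mul_le_mul_of_nonneg_left this (by positivity)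
              _ = D ^ 4 * E * F * g x := by ring
  have hGsum : Summable fun x => D ^ 4 * E * F * g x := (hgsum.mul_left _)
  have hfsum : Summable fun x : ℤ => |u 0 x * u 1 x * u 2 x * u 3 x| :=
    Summable.of_nonneg_of_le (fun x => abs_nonneg _) key hGsum
  calc |∑' x : ℤ, u 0 x * u 1 x * u 2 x * u 3 x|
      ≤ ∑' x : ℤ, |u 0 x * u 1 x * u 2 x * u 3 x| := by
        simpa only [Real.norm_eq_abs] using
          norm_tsum_le_tsum_norm (f := fun x : ℤ => u 0 x * u 1 x * u 2 x * u 3 x)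
            (by simpa only [Real.norm_eq_abs] using hfsum)
    _ ≤ ∑' x : ℤ, D ^ 4 * E * F * g x := Summable.tsum_le_tsum key hfsum hGsum
    _ = D ^ 4 * E * F * ∑' x : ℤ, g x := tsum_mul_left
    _ = (D ^ 4 * ∑' x : ℤ, g x) * E * F := by ring
end
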